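/- arXiv:1506.07437 — 5 statements merged into one kernel-verified Lean document; each statement's English description precedes it below -/
import Mathlib

section
/- Let F be a field, q a positive integer, σ : {0,…,q−1} → F an injective function with σ(0) = 0, and 1 ≤ k ≤ q. Then the supplemented Pascal matrix H_{q,k} has the MDS property: every k of its q+1 columns are linearly independent over F. -/
/-- The finite-field binomial entry `f_m(n) = ∏_{i=1}^{m} (σ(n) − σ(i−1))/σ(i)`
(empty product `= 1` for `m = 0`). -/
def pascalEntry {F : Type*} [Field F] (σ : ℕ → F) (m n : ℕ) : F :=
  ∏ i ∈ Finset.range m, (σ n - σ i) / σ (i + 1)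

/-- The truncated Pascal matrix `P_{q,k}` : the `k × q` matrix with entry `f_m(n)`. -/
def truncPascal (F : Type*) [Field F] (σ : ℕ → F) (q k : ℕ) :
    Matrix (Fin k) (Fin q) F :=
  fun m n => pascalEntry σ m n

/-- The supplemented Pascal matrix `H_{q,k}` : `P_{q,k}` with the extra column `e_k`
(a `1` in the last entry, zeros elsewhere) appended. -/
def suppPascal (F : Type*) [Field F] (σ : ℕ → F) (q k : ℕ) :
    Matrix (Fin k) (Fin (q + 1)) F :=
  fun m n =>
    if h : (n : ℕ) < q then truncPascal F σ q k m ⟨n, h⟩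
    else if (m : ℕ) = k - 1 then 1 else 0

/-!
Up to the nonzero factor `∏_{1 ≤ i ≤ m} σ(i)`, the entry `f_m(n)` is `p_m(σ(n))` for the monic
polynomial `p_m = ∏_{i < m} (X - σ(i))` of degree `m`. Hence a `k`-column minor of `P_{q,k}` is
a nonzero multiple of the Vandermonde determinant of the distinct points `σ(n)`. If the minor
contains the column `e_k`, Laplace expansion along it leaves a `(k-1)`-column minor of
`P_{q,k-1}`.
-/

open Finset Polynomial Matrix

theorem pascalEntry_eq_inv_mul_eval {F : Type*} [Field F] (σ : ℕ → F) (m n : ℕ) :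
    pascalEntry σ m n =
      (∏ i ∈ range m, σ (i + 1))⁻¹ * (∏ i ∈ range m, (X - C (σ i))).eval (σ n) := by
  simp only [pascalEntry, eval_prod, eval_sub, eval_X, eval_C, div_eq_mul_inv,
    prod_mul_distrib, prod_inv_distrib]
  ring

theorem det_pascalEntry {F : Type*} [Field F] (σ : ℕ → F) {m : ℕ} (n : Fin m → ℕ) :
    (Matrix.of fun r j : Fin m => pascalEntry σ r (n j)).det =
      (∏ r : Fin m, ∏ i ∈ range r, σ (i + 1))⁻¹ * (vandermonde fun j => σ (n j)).det := by
  have hmonic (r : Fin m) : (∏ i ∈ range r, (X - C (σ i))).Monic :=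
    monic_prod_of_monic _ _ fun i _ => monic_X_sub_C _
  have hdeg (r : Fin m) : (∏ i ∈ range r, (X - C (σ i))).natDegree = (r : ℕ) := by
    simp [natDegree_prod_of_monic _ _ fun i _ => monic_X_sub_C (σ i)]
  have hfactor : (Matrix.of fun r j : Fin m => pascalEntry σ r (n j)) =
      diagonal (fun r : Fin m => (∏ i ∈ range r, σ (i + 1))⁻¹) *
        (Matrix.of fun j r : Fin m => (∏ i ∈ range r, (X - C (σ i))).eval (σ (n j)))ᵀ := by
    ext r j
    simp [diagonal_mul, pascalEntry_eq_inv_mul_eval]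
  rw [hfactor, det_mul, det_transpose, det_diagonal, prod_inv_distrib,
    det_eval_matrixOfPolynomials_eq_det_vandermonde _ _ hdeg hmonic]

theorem det_pascalEntry_ne_zero {F : Type*} [Field F] (σ : ℕ → F) {m : ℕ}
    (hσ : ∀ i, 0 < i → i < m → σ i ≠ 0) (n : Fin m → ℕ)
    (hn : Function.Injective fun j => σ (n j)) :
    (Matrix.of fun r j : Fin m => pascalEntry σ r (n j)).det ≠ 0 := by
  rw [det_pascalEntry]
  refine mul_ne_zero (inv_ne_zero <| prod_ne_zero_iff.mpr fun r _ =>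
    prod_ne_zero_iff.mpr fun i hi => hσ _ i.succ_pos ?_) (det_vandermonde_ne_zero_iff.mpr hn)
  have := mem_range.mp hi
  omega

theorem Matrix.det_eq_of_col_eq_single_last {R : Type*} [CommRing R] {n : ℕ}
    (A : Matrix (Fin (n + 1)) (Fin (n + 1)) R) (j : Fin (n + 1))
    (hA : ∀ i, A i j = (Pi.single (Fin.last n) 1 : Fin (n + 1) → R) i) :
    A.det = (-1) ^ (n + j : ℕ) * (A.submatrix Fin.castSucc j.succAbove).det := by
  rw [det_succ_column A j, sum_eq_single (Fin.last n)]
  · simp [hA]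
  · intro i _ hi
    simp [hA, hi]
  · simp

theorem suppPascal_apply_of_lt {F : Type*} [Field F] (σ : ℕ → F) {q k : ℕ} (m : Fin k)
    (n : Fin (q + 1)) (hn : (n : ℕ) < q) :
    suppPascal F σ q k m n = pascalEntry σ m n := by
  simp [suppPascal, truncPascal, hn]

theorem suppPascal_apply_last {F : Type*} [Field F] (σ : ℕ → F) {q k : ℕ} (m : Fin (k + 1)) :
    suppPascal F σ q (k + 1) m (Fin.last q) = (Pi.single (Fin.last k) 1 : Fin (k + 1) → F) m := by
  simp [suppPascal, Pi.single_apply, Fin.ext_iff]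

theorem suppPascal_MDS_general (F : Type*) [Field F] (q : ℕ)
    (σ : ℕ → F) (hσinj : Set.InjOn σ (Set.Iio q)) (hσ0 : σ 0 = 0)
    (k : ℕ) (hkq : k ≤ q) :
    ∀ c : Fin k → Fin (q + 1), Function.Injective c →
      LinearIndependent F (fun i : Fin k => fun r : Fin k =>
        suppPascal F σ q k r (c i)) := by
  intro c hc
  have hσ : ∀ i, 0 < i → i < k → σ i ≠ 0 := fun i hi hik h =>
    hi.ne' (hσinj (Set.mem_Iio.mpr (by omega)) (Set.mem_Iio.mpr (by omega)) (h.trans hσ0.symm))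
  have hσc {m : ℕ} (n : Fin m → Fin k) (hn : Function.Injective n)
      (hlt : ∀ j, (c (n j) : ℕ) < q) : Function.Injective fun j => σ (c (n j)) :=
    fun a b hab => hn <| hc <| Fin.ext <| hσinj (hlt a) (hlt b) hab
  rw [show (fun i r => suppPascal F σ q k r (c i)) = ((suppPascal F σ q k).submatrix id c).col
    from rfl, linearIndependent_cols_iff_isUnit, isUnit_iff_isUnit_det, isUnit_iff_ne_zero]
  by_cases hlast : ∃ i₀, c i₀ = Fin.last q
  · obtain ⟨i₀, hi₀⟩ := hlast
    obtain ⟨k, rfl⟩ : ∃ k', k = k' + 1 := ⟨k - 1, by have := i₀.pos; omega⟩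
    have hlt (j : Fin k) : (c (i₀.succAbove j) : ℕ) < q :=
      Fin.val_lt_last (hi₀ ▸ hc.ne (i₀.succAbove_ne j))
    rw [Matrix.det_eq_of_col_eq_single_last _ i₀ (by simp [hi₀, suppPascal_apply_last])]
    refine mul_ne_zero (by simp) ?_
    convert det_pascalEntry_ne_zero σ (fun i hi hik => hσ i hi (by omega)) _
      (hσc _ Fin.succAbove_right_injective hlt) using 2
    ext r j
    simp [suppPascal_apply_of_lt _ _ _ (hlt j)]
  · rw [not_exists] at hlast
    have hlt (j : Fin k) : (c j : ℕ) < q := Fin.val_lt_last (hlast j)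
    convert det_pascalEntry_ne_zero σ hσ _ (hσc id Function.injective_id hlt) using 2
    ext r j
    simp [suppPascal_apply_of_lt _ _ _ (hlt j)]

/-- Every `k` columns of the supplemented Pascal matrix `H_{q,k}` are linearly
independent over `F`. -/
theorem suppPascal_MDS (F : Type*) [Field F] (q : ℕ) (hq : 0 < q)
    (σ : ℕ → F) (hσinj : Set.InjOn σ (Set.Iio q)) (hσ0 : σ 0 = 0)
    (k : ℕ) (hk1 : 1 ≤ k) (hkq : k ≤ q) :
    ∀ c : Fin k → Fin (q + 1), Function.Injective c →
      LinearIndependent F (fun i : Fin k => fun r : Fin k =>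
        suppPascal F σ q k r (c i)) :=
  suppPascal_MDS_general F q σ hσinj hσ0 k hkq
end

section
/- Let F be a field, q a positive integer, σ : {0,…,q−1} → F an injective function with σ(0) = 0, and 1 ≤ k ≤ q. Then the truncated Pascal matrix P_{q,k} has the MDS property: every k of its q columns are linearly independent over F. -/
open Polynomial Lagrange Finset

theorem Matrix.det_of_mul_eval_ne_zero {R : Type*} [CommRing R] [IsDomain R] {n : ℕ}
    {d : Fin n → R} {p : Fin n → R[X]} {v : Fin n → R} (hd : ∀ i, d i ≠ 0)
    (h_deg : ∀ i, (p i).natDegree = i) (h_monic : ∀ i, (p i).Monic)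
    (hv : Function.Injective v) :
    (Matrix.of fun i j => d i * (p i).eval (v j)).det ≠ 0 := by
  have h_vandermonde : (Matrix.of fun i j => (p i).eval (v j)).det ≠ 0 := by
    rw [← Matrix.det_transpose]
    exact det_eval_matrixOfPolynomials_eq_det_vandermonde v p h_deg h_monic ▸
      Matrix.det_vandermonde_ne_zero_iff.mpr hv
  refine (Matrix.det_mul_column d (.of fun i j => (p i).eval (v j))).trans_ne ?_
  exact mul_ne_zero (prod_ne_zero_iff.mpr fun i _ => hd i) h_vandermonde

theorem pascalEntry_eq_mul_eval_nodal {F : Type*} [Field F] (σ : ℕ → F) (m n : ℕ) :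
    pascalEntry σ m n = (∏ i ∈ range m, σ (i + 1))⁻¹ * (nodal (range m) σ).eval (σ n) := by
  rw [eval_nodal, ← prod_inv_distrib, ← prod_mul_distrib, pascalEntry]
  exact prod_congr rfl fun i _ => div_eq_inv_mul _ _

theorem truncPascal_MDS_general (F : Type*) [Field F] (q : ℕ)
    (σ : ℕ → F) (hσinj : Set.InjOn σ (Set.Iio q)) (hσ0 : σ 0 = 0)
    (k : ℕ) :
    ∀ c : Fin k → Fin q, Function.Injective c →
      LinearIndependent F (fun i : Fin k => fun r : Fin k =>
        truncPascal F σ q k r (c i)) := by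
  intro c hc
  have hkq : k ≤ q := by simpa using Fintype.card_le_of_injective c hc
  have hσ_ne_zero : ∀ j, 0 < j → j < q → σ j ≠ 0 := fun j hj hjq h =>
    hj.ne' (hσinj hjq (hj.trans hjq) (h.trans hσ0.symm))
  have hscale : ∀ r : Fin k, (∏ i ∈ range r, σ (i + 1))⁻¹ ≠ 0 := fun r =>
    inv_ne_zero (prod_ne_zero_iff.mpr fun i hi =>
      hσ_ne_zero _ i.succ_pos (by have := mem_range.mp hi; omega))
  have hnodes : Function.Injective fun i => σ (c i) := fun i j h =>
    hc (Fin.ext (hσinj (c i).isLt (c j).isLt h))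
  have hcols : (Matrix.of fun r i => truncPascal F σ q k r (c i)) =
      Matrix.of fun (r i : Fin k) =>
        (∏ j ∈ range r, σ (j + 1))⁻¹ * (nodal (range r) σ).eval (σ (c i)) := by
    ext r i
    exact pascalEntry_eq_mul_eval_nodal σ r (c i)
  have hdet := Matrix.det_of_mul_eval_ne_zero hscale (p := fun r => nodal (range r) σ)
    (fun r => by simp [natDegree_nodal]) (fun _ => nodal_monic) hnodes
  rw [← hcols] at hdet
  exact Matrix.linearIndependent_cols_iff_isUnit.mpr
    ((Matrix.isUnit_iff_isUnit_det _).mpr (isUnit_iff_ne_zero.mpr hdet))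

/-- Truncation Lemma: every `k` columns of the truncated Pascal matrix `P_{q,k}` are
linearly independent over `F`. -/
theorem truncPascal_MDS (F : Type*) [Field F] (q : ℕ) (hq : 0 < q)
    (σ : ℕ → F) (hσinj : Set.InjOn σ (Set.Iio q)) (hσ0 : σ 0 = 0)
    (k : ℕ) (hk1 : 1 ≤ k) (hkq : k ≤ q) :
    ∀ c : Fin k → Fin q, Function.Injective c →
      LinearIndependent F (fun i : Fin k => fun r : Fin k =>
        truncPascal F σ q k r (c i)) :=
  truncPascal_MDS_general F q σ hσinj hσ0 k
end

section
/- Let F be a field, k ≥ 1, and let M be a k×n matrix over F such that (i) every k columns of M are linearly independent, and (ii) every k−1 columns of the (k−1)×n matrix formed by the first k−1 rows of M are linearly independent. Let [M | e_k] denote the k×(n+1) matrix obtained by appending to M the column vector e_k that has a 1 in the last (index k−1) entry and 0 everywhere else. Then every k columns of [M | e_k] are linearly independent over F. -/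
/-!
Among `k` distinct columns of `[M | e_k]` at most one is `e_k`. If none is, they are columns
of `M`. If one is, a vanishing linear combination restricted to the first `k − 1` rows kills
`e_k`, and leaves a vanishing combination of `k − 1` columns of the top part of `M`, so all
the other coefficients vanish; the coefficient of `e_k` then vanishes because `e_k ≠ 0`.
-/

/-- Appending the column `e_k` (a `1` in the last entry, zeros elsewhere) to a `k × n`
matrix `M`. -/
def appendLastUnitCol {F : Type*} [Field F] {k n : ℕ}
    (M : Matrix (Fin k) (Fin n) F) : Matrix (Fin k) (Fin (n + 1)) F :=
  fun r j =>
    if h : (j : ℕ) < n then M r ⟨j, h⟩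
    else if (r : ℕ) = k - 1 then 1 else 0

open Function

theorem linearIndependent_of_map_succAbove {K V W : Type*} [DivisionRing K]
    [AddCommGroup V] [Module K V] [AddCommGroup W] [Module K W] {m : ℕ}
    {v : Fin (m + 1) → V} {p : Fin (m + 1)} (π : V →ₗ[K] W) (hπp : π (v p) = 0)
    (hp : v p ≠ 0) (hrest : LinearIndependent K fun j => π (v (p.succAbove j))) :
    LinearIndependent K v := by
  rw [Fintype.linearIndependent_iff]
  intro g hg
  have hrest0 : ∀ j, g (p.succAbove j) = 0 := by
    apply Fintype.linearIndependent_iff.mp hrest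
    simpa [Fin.sum_univ_succAbove _ p, hπp] using congrArg π hg
  refine (Fin.forall_iff_succAbove p).mpr ⟨?_, hrest0⟩
  rw [Fin.sum_univ_succAbove _ p] at hg
  simpa [hrest0, hp] using hg

theorem appendLastUnitCol_castSucc {F : Type*} [Field F] {k n : ℕ}
    (M : Matrix (Fin k) (Fin n) F) (r : Fin k) (j : Fin n) :
    appendLastUnitCol M r j.castSucc = M r j := by
  simp [appendLastUnitCol]

section appendLastUnitCol

variable {F : Type*} [Field F] {m n : ℕ} (M : Matrix (Fin (m + 1)) (Fin n) F)

theorem appendLastUnitCol_col_last :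
    (fun r => appendLastUnitCol M r (Fin.last n)) = Pi.single (Fin.last m) 1 := by
  ext r
  simp [appendLastUnitCol, Pi.single_apply, Fin.ext_iff]

theorem linearIndependent_appendLastUnitCol_of_ne_last
    (hMDS : ∀ c : Fin (m + 1) → Fin n, Injective c →
      LinearIndependent F (fun i : Fin (m + 1) => fun r : Fin (m + 1) => M r (c i)))
    {c : Fin (m + 1) → Fin (n + 1)} (hc : Injective c) (hlast : ∀ i, c i ≠ Fin.last n) :
    LinearIndependent F fun i r => appendLastUnitCol M r (c i) := by
  choose c' hc' using fun i => Fin.exists_castSucc_eq.mpr (hlast i)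
  obtain rfl : Fin.castSucc ∘ c' = c := funext hc'
  simpa [appendLastUnitCol_castSucc] using hMDS c' hc.of_comp

theorem linearIndependent_appendLastUnitCol_of_eq_last
    (hTop : ∀ c : Fin m → Fin n, Injective c →
      LinearIndependent F (fun i : Fin m => fun r : Fin m => M (Fin.castSucc r) (c i)))
    {c : Fin (m + 1) → Fin (n + 1)} (hc : Injective c) {p : Fin (m + 1)}
    (hp : c p = Fin.last n) :
    LinearIndependent F fun i r => appendLastUnitCol M r (c i) := by
  have hlast : ∀ j, c (p.succAbove j) ≠ Fin.last n := fun j h =>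
    p.succAbove_ne j (hc (h.trans hp.symm))
  choose c' hc' using fun j => Fin.exists_castSucc_eq.mpr (hlast j)
  have hc'inj : Injective c' := by
    refine Injective.of_comp (f := Fin.castSucc) ?_
    rw [show Fin.castSucc ∘ c' = c ∘ p.succAbove from funext hc']
    exact hc.comp p.succAbove_right_injective
  refine linearIndependent_of_map_succAbove (p := p) (LinearMap.funLeft F F Fin.castSucc)
    ?_ ?_ ?_
  · rw [hp, appendLastUnitCol_col_last]
    ext r
    simp [Fin.castSucc_ne_last]
  · rw [hp, appendLastUnitCol_col_last]
    exact Pi.single_ne_zero_iff.mpr one_ne_zero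
  · have hcols : (fun j r => appendLastUnitCol M (Fin.castSucc r) (c (p.succAbove j))) =
        fun j r => M (Fin.castSucc r) (c' j) := by
      simp [← hc', appendLastUnitCol_castSucc]
    exact hcols ▸ hTop c' hc'inj

end appendLastUnitCol

theorem append_unit_col_MDS_general (F : Type*) [Field F] (k n : ℕ)
    (M : Matrix (Fin k) (Fin n) F)
    (hMDS : ∀ c : Fin k → Fin n, Function.Injective c →
      LinearIndependent F (fun i : Fin k => fun r : Fin k => M r (c i)))
    (hTop : ∀ c : Fin (k - 1) → Fin n, Function.Injective c →
      LinearIndependent F (fun i : Fin (k - 1) => fun r : Fin (k - 1) =>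
        M (Fin.castLE (Nat.sub_le k 1) r) (c i))) :
    ∀ c : Fin k → Fin (n + 1), Function.Injective c →
      LinearIndependent F (fun i : Fin k => fun r : Fin k =>
        appendLastUnitCol M r (c i)) := by
  intro c hc
  cases k with
  | zero => exact linearIndependent_empty_type
  | succ m =>
    by_cases hlast : ∃ p, c p = Fin.last n
    · obtain ⟨p, hp⟩ := hlast
      exact linearIndependent_appendLastUnitCol_of_eq_last M hTop hc hp
    · push Not at hlast
      exact linearIndependent_appendLastUnitCol_of_ne_last M hMDS hc hlast

/-- If every `k` columns of a `k × n` matrix `M` are linearly independent, and every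
`k − 1` columns of the `(k−1) × n` matrix formed by the first `k − 1` rows of `M` are
linearly independent, then every `k` columns of `[M | e_k]` are linearly independent. -/
theorem append_unit_col_MDS (F : Type*) [Field F] (k n : ℕ) (hk1 : 1 ≤ k)
    (M : Matrix (Fin k) (Fin n) F)
    (hMDS : ∀ c : Fin k → Fin n, Function.Injective c →
      LinearIndependent F (fun i : Fin k => fun r : Fin k => M r (c i)))
    (hTop : ∀ c : Fin (k - 1) → Fin n, Function.Injective c →
      LinearIndependent F (fun i : Fin (k - 1) => fun r : Fin (k - 1) =>
        M (Fin.castLE (Nat.sub_le k 1) r) (c i))) :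
    ∀ c : Fin k → Fin (n + 1), Function.Injective c →
      LinearIndependent F (fun i : Fin k => fun r : Fin k =>
        appendLastUnitCol M r (c i)) :=
  append_unit_col_MDS_general F k n M hMDS hTop
end

section
/- Let p be a prime, h a positive integer, q = p^h, and let F_q denote the finite field with q elements (e.g., the Galois field GF(p^h)). For every positive integer k ≤ q and every positive integer n ≤ q + 1, there exists a k×n matrix over F_q in which every k columns are linearly independent. (Equivalently, the uniform matroid U_n^k with n ≤ q+1 is representable over F_q.) -/
/-!
Identify the columns with distinct points of the projective line `F ∪ {∞}`, which has `q + 1`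
points, and give the column of a point with homogeneous coordinates `(a : b)` the entries
`a ^ r * b ^ (k - 1 - r)`. Any `k` of these columns form a projective Vandermonde matrix, whose
determinant is the product of the `2 × 2` minors `a_j b_i - a_i b_j`; distinct points of the
projective line are not proportional, so none of these minors vanish.
-/

open Matrix Finset

namespace Matrix

theorem det_projVandermonde_ne_zero {R : Type*} [CommRing R] [IsDomain R] {n : ℕ}
    {v w : Fin n → R} (h : Pairwise fun i j => v j * w i - v i * w j ≠ 0) :
    (projVandermonde v w).det ≠ 0 := by
  rw [det_projVandermonde]
  exact prod_ne_zero_iff.2 fun i _ => prod_ne_zero_iff.2 fun j hj => h (mem_Ioi.1 hj).ne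

theorem linearIndependent_projVandermonde {K : Type*} [Field K] {n : ℕ} {v w : Fin n → K}
    (h : Pairwise fun i j => v j * w i - v i * w j ≠ 0) :
    LinearIndependent K (projVandermonde v w) :=
  linearIndependent_rows_iff_isUnit.2 <|
    (isUnit_iff_isUnit_det _).2 (det_projVandermonde_ne_zero h).isUnit

end Matrix

section ProjectiveLine

variable {F : Type*} [Field F]

/-- Homogeneous coordinates on `Option F`, read as the projective line `F ∪ {∞}`:
`some x = (x : 1)` and `none = ∞ = (1 : 0)`. -/
def homCoords : Option F → F × F
  | some x => (x, 1)
  | none => (1, 0)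

theorem homCoords_det_ne_zero {a b : Option F} (hab : a ≠ b) :
    (homCoords b).1 * (homCoords a).2 - (homCoords a).1 * (homCoords b).2 ≠ 0 := by
  cases a <;> cases b <;> simp_all [homCoords, sub_eq_zero, eq_comm]

end ProjectiveLine

theorem uniform_matroid_representable_general (p h : ℕ) [Fact p.Prime] (hh : 0 < h)
    (k n : ℕ) (hn : n ≤ p ^ h + 1) :
    ∃ M : Matrix (Fin k) (Fin n) (GaloisField p h),
      ∀ c : Fin k → Fin n, Function.Injective c →
        LinearIndependent (GaloisField p h)
          (fun i : Fin k => fun r : Fin k => M r (c i)) := by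
  have := Fintype.ofFinite (GaloisField p h)
  have hcard : Fintype.card (Fin n) ≤ Fintype.card (Option (GaloisField p h)) := by
    rwa [Fintype.card_fin, Fintype.card_option, ← Nat.card_eq_fintype_card,
      GaloisField.card p h hh.ne']
  obtain ⟨f⟩ := Function.Embedding.nonempty_of_card_le hcard
  exact ⟨(rectVandermonde (fun j => (homCoords (f j)).1) (fun j => (homCoords (f j)).2) k)ᵀ,
    fun c hc => linearIndependent_projVandermonde fun i j hij =>
      homCoords_det_ne_zero (f.injective.ne (hc.ne hij))⟩

/-- Let `q = p^h` with `p` prime and `h ≥ 1`. For all positive integers `k ≤ q` and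
`n ≤ q + 1` there exists a `k × n` matrix over the finite field `F_q = GF(p^h)` in
which every `k` columns are linearly independent (equivalently, the uniform matroid
`U_n^k` with `n ≤ q + 1` is representable over `F_q`). -/
theorem uniform_matroid_representable (p h : ℕ) [Fact p.Prime] (hh : 0 < h)
    (k n : ℕ) (hk1 : 1 ≤ k) (hkq : k ≤ p ^ h) (hn1 : 1 ≤ n) (hn : n ≤ p ^ h + 1) :
    ∃ M : Matrix (Fin k) (Fin n) (GaloisField p h),
      ∀ c : Fin k → Fin n, Function.Injective c →
        LinearIndependent (GaloisField p h)
          (fun i : Fin k => fun r : Fin k => M r (c i)) :=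
  uniform_matroid_representable_general p h hh k n hn
end

section
/- Let p be a prime, h a positive integer, q = p^h, and let F_q denote the finite field with q elements (e.g., the Galois field GF(p^h)). For every positive integer k ≤ q there exists a k×(q+1) matrix over F_q in which every k columns are linearly independent and which has at least k(k−1)/2 zero entries. -/
/-!
Enumerate the field as `a₀, …, a_{q-1}` and take the Newton basis
`n_r = (X - a₀) ⋯ (X - a_{r-1})`. Row `r` of the matrix lists `n_r(a₀), …, n_r(a_{q-1})` and,
in the last column, the coefficient of `X^(k-1)` in `n_r` (its value "at infinity"); these rows
span the doubly extended Reed–Solomon code. A combination of the rows is a polynomial of degree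
`< k`; if it vanishes on `k` columns it has more roots than its degree allows (after dropping
one degree for the column at infinity), so the matrix is MDS. Since `n_r(a_j) = 0` for `j < r`,
the strictly lower triangle supplies `k(k-1)/2` zeros.
-/

open scoped Classical
open Polynomial Finset

noncomputable section

section NewtonBasis

variable {R : Type*} [CommRing R]

def newtonSeq [Nontrivial R] (a : ℕ → R) : Polynomial.Sequence R where
  elems' r := Lagrange.nodal (range r) a
  degree_eq' r := by simp [Lagrange.degree_nodal]

lemma eval_newtonSeq_of_lt [Nontrivial R] (a : ℕ → R) {r j : ℕ} (h : j < r) :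
    (newtonSeq a r).eval (a j) = 0 :=
  Lagrange.eval_nodal_at_node (mem_range.2 h)

/-- Column `j < q` evaluates at the node `a j`; the last column `j = q` is the point at infinity,
which on polynomials of degree `< k` reads off the coefficient of `X^(k-1)`. -/
def extendedEval (a : ℕ → R) (k : ℕ) {q : ℕ} (j : Fin (q + 1)) : R[X] →ₗ[R] R :=
  if (j : ℕ) < q then leval (a j) else lcoeff R (k - 1)

lemma eq_zero_of_extendedEval_eq_zero [IsDomain R] {a : ℕ → R} {q k : ℕ}
    (ha : Set.InjOn a (Set.Iio q)) {c : Fin k → Fin (q + 1)} (hc : Function.Injective c)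
    {g : R[X]} (hg : g.degree < k) (hgc : ∀ i, extendedEval a k (c i) g = 0) : g = 0 := by
  have hfinite : ∀ j : Fin (q + 1), j ≠ Fin.last q → (j : ℕ) < q := fun j hj =>
    Fin.val_lt_last hj
  set s := (univ.image c).erase (Fin.last q)
  have hs : Set.InjOn (fun j : Fin (q + 1) => a j) s := fun i hi j hj hij =>
    Fin.ext (ha (hfinite i (ne_of_mem_erase hi)) (hfinite j (ne_of_mem_erase hj)) hij)
  refine eq_zero_of_degree_lt_of_eval_index_eq_zero s hs ?_ ?_
  · have hcard : #(univ.image c) = k := by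
      rw [card_image_of_injective _ hc, card_univ, Fintype.card_fin]
    by_cases hlast : Fin.last q ∈ univ.image c
    · obtain ⟨i, -, hi⟩ := mem_image.1 hlast
      have hcoeff : g.coeff (k - 1) = 0 := by simpa [extendedEval, hi] using hgc i
      rw [card_erase_of_mem hlast, hcard, degree_lt_iff_coeff_zero]
      intro m hm
      rcases hm.eq_or_lt with rfl | hm
      · exact hcoeff
      · exact (degree_lt_iff_coeff_zero g k).1 hg m (by omega)
    · rwa [show s = univ.image c from erase_eq_of_notMem hlast, hcard]
  · intro j hj
    obtain ⟨i, -, rfl⟩ := mem_image.1 (mem_of_mem_erase hj)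
    simpa [extendedEval, hfinite _ (ne_of_mem_erase hj)] using hgc i

def sparseMDSMatrix [Nontrivial R] (a : ℕ → R) (q k : ℕ) : Matrix (Fin k) (Fin (q + 1)) R :=
  Matrix.of fun r j => extendedEval a k j (newtonSeq a r)

lemma sparseMDSMatrix_apply_eq_zero [Nontrivial R] (a : ℕ → R) {q k : ℕ} (hk : k ≤ q + 1)
    {r : Fin k} {j : Fin (q + 1)} (h : (j : ℕ) < r) : sparseMDSMatrix a q k r j = 0 := by
  have hj : (j : ℕ) < q := by omega
  simpa [sparseMDSMatrix, extendedEval, hj] using eval_newtonSeq_of_lt a h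

end NewtonBasis

lemma linearIndependent_sparseMDSMatrix_cols {F : Type*} [Field F] {a : ℕ → F} {q k : ℕ}
    (ha : Set.InjOn a (Set.Iio q)) {c : Fin k → Fin (q + 1)} (hc : Function.Injective c) :
    LinearIndependent F (fun i r => sparseMDSMatrix a q k r (c i)) := by
  set S := (sparseMDSMatrix a q k).submatrix id c
  change LinearIndependent F S.col
  rw [Matrix.linearIndependent_cols_iff_isUnit, ← Matrix.linearIndependent_rows_iff_isUnit,
    Fintype.linearIndependent_iff]
  intro w hw
  set g := ∑ r : Fin k, w r • newtonSeq a r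
  have hg : g.degree < k := by
    rw [← mem_degreeLT]
    refine Submodule.sum_mem _ fun r _ => Submodule.smul_mem _ _ ?_
    rw [mem_degreeLT, (newtonSeq a).degree_eq]
    exact_mod_cast r.2
  have hgc : ∀ i, extendedEval a k (c i) g = 0 := fun i => by
    simpa [g, S, sparseMDSMatrix] using congrFun hw i
  exact Fintype.linearIndependent_iff.1 ((newtonSeq a).linearIndependent.comp _ Fin.val_injective)
    w (eq_zero_of_extendedEval_eq_zero ha hc hg hgc)

lemma card_filter_val_lt_val {k n : ℕ} (hk : k ≤ n + 1) :
    #{e : Fin k × Fin n | (e.2 : ℕ) < e.1} = k * (k - 1) / 2 := by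
  rw [card_filter, Fintype.sum_prod_type]
  simp only [← card_filter, Fin.card_filter_val_lt]
  rw [← sum_range_id, ← Fin.sum_univ_eq_sum_range]
  exact sum_congr rfl fun r _ => min_eq_right (by omega)

theorem exists_sparse_mds {F : Type*} [Field F] {a : ℕ → F} {q k : ℕ}
    (ha : Set.InjOn a (Set.Iio q)) (hk : k ≤ q + 1) :
    ∃ M : Matrix (Fin k) (Fin (q + 1)) F,
      (∀ c : Fin k → Fin (q + 1), Function.Injective c →
        LinearIndependent F (fun i r => M r (c i))) ∧
      k * (k - 1) / 2 ≤ #{e : Fin k × Fin (q + 1) | M e.1 e.2 = 0} := by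
  refine ⟨sparseMDSMatrix a q k, fun c hc => linearIndependent_sparseMDSMatrix_cols ha hc, ?_⟩
  calc k * (k - 1) / 2 = #{e : Fin k × Fin (q + 1) | (e.2 : ℕ) < e.1} :=
        (card_filter_val_lt_val (by omega)).symm
    _ ≤ _ := card_le_card <| monotone_filter_right _ fun e _ h =>
        sparseMDSMatrix_apply_eq_zero a hk h

lemma Finite.exists_injOn_Iio_natCard (α : Type*) [Finite α] [Nonempty α] :
    ∃ a : ℕ → α, Set.InjOn a (Set.Iio (Nat.card α)) := by
  let e := Finite.equivFin α
  refine ⟨fun n => if h : n < Nat.card α then e.symm ⟨n, h⟩ else Classical.arbitrary α, ?_⟩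
  intro m hm n hn hmn
  simpa [dif_pos (Set.mem_Iio.1 hm), dif_pos (Set.mem_Iio.1 hn)] using hmn

end

theorem sparse_MDS_matrix_exists_general (p h : ℕ) [Fact p.Prime] (hh : 0 < h)
    (k : ℕ) (hkq : k ≤ p ^ h) :
    ∃ M : Matrix (Fin k) (Fin (p ^ h + 1)) (GaloisField p h),
      (∀ c : Fin k → Fin (p ^ h + 1), Function.Injective c →
        LinearIndependent (GaloisField p h)
          (fun i : Fin k => fun r : Fin k => M r (c i))) ∧
      k * (k - 1) / 2 ≤
        ((Finset.univ : Finset (Fin k × Fin (p ^ h + 1))).filter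
          (fun e : Fin k × Fin (p ^ h + 1) => M e.1 e.2 = 0)).card := by
  obtain ⟨a, ha⟩ := Finite.exists_injOn_Iio_natCard (GaloisField p h)
  rw [GaloisField.card p h hh.ne'] at ha
  exact exists_sparse_mds ha (hkq.trans (Nat.le_succ _))

/-- Let `q = p^h` with `p` prime and `h ≥ 1`. For every positive integer `k ≤ q` there
exists a `k × (q+1)` matrix over the finite field `F_q = GF(p^h)` in which every `k`
columns are linearly independent and which has at least `k(k−1)/2` zero entries. -/
theorem sparse_MDS_matrix_exists (p h : ℕ) [Fact p.Prime] (hh : 0 < h)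
    (k : ℕ) (hk1 : 1 ≤ k) (hkq : k ≤ p ^ h) :
    ∃ M : Matrix (Fin k) (Fin (p ^ h + 1)) (GaloisField p h),
      (∀ c : Fin k → Fin (p ^ h + 1), Function.Injective c →
        LinearIndependent (GaloisField p h)
          (fun i : Fin k => fun r : Fin k => M r (c i))) ∧
      k * (k - 1) / 2 ≤
        ((Finset.univ : Finset (Fin k × Fin (p ^ h + 1))).filter
          (fun e : Fin k × Fin (p ^ h + 1) => M e.1 e.2 = 0)).card :=
  sparse_MDS_matrix_exists_general p h hh k hkq
end
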